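/- arXiv:1802.00959 — 4 statements merged into one kernel-verified Lean document; each statement's English description precedes it below -/
import Mathlib

section
/- For complex numbers q, y, z with |q| < 1, the trivariate generalization ν(y,z;q) := Σ_{n≥0} yⁿ zⁿ q^{n²+n} / ((yq; q²)_{n+1}) equals Σ_{n≥0} (−zq; q²)_n (yq)ⁿ, whenever both series converge absolutely. -/
open scoped BigOperators

/-- Finite q-Pochhammer symbol `(a; q)_n`. -/
noncomputable def qPoch (a q : ℂ) (n : ℕ) : ℂ :=
  ∏ k ∈ Finset.range n, (1 - a * q ^ k)

/-- Infinite q-Pochhammer symbol `(a; q)_∞`. -/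
noncomputable def qPochInf (a q : ℂ) : ℂ :=
  ∏' k : ℕ, (1 - a * q ^ k)

/-
Both sides satisfy `(1 - y q) F(y) = 1 + y z q² F(y q²)`: on the left peel off the first factor
of `(y q; q²)_{n+1}`, on the right split the last factor of `(-z q; q²)_{n+1}`. So their
difference `D` obeys `(y q; q²)_n D(y) = yⁿ zⁿ q^(n² + n) D(y q^(2n))`. The values `D(y q^(2n))`
are uniformly bounded, because the products of the factors `1 - y q^(2k+1)` over any finite set of
`k` stay away from `0` (the factors tend to `1` summably), while `yⁿ zⁿ q^(n² + n) → 0`.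
Hence `D(y) = 0`.
-/

lemma qPoch_succ (a q : ℂ) (n : ℕ) : qPoch a q (n + 1) = qPoch a q n * (1 - a * q ^ n) :=
  Finset.prod_range_succ _ _

lemma qPoch_succ' (a q : ℂ) (n : ℕ) : qPoch a q (n + 1) = (1 - a) * qPoch (a * q) q n := by
  simp only [qPoch, Finset.prod_range_succ', pow_zero, mul_one, pow_succ', mul_assoc, mul_comm]

lemma exists_pos_le_prod_norm_one_add {ι R : Type*} [NormedCommRing R] [NormOneClass R]
    {f : ι → R} (hf : Summable fun i ↦ ‖f i‖) (hne : ∀ i, 1 + f i ≠ 0) :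
    ∃ c > 0, ∀ t : Finset ι, c ≤ ∏ i ∈ t, ‖1 + f i‖ := by
  classical
  obtain ⟨s, hs⟩ := prod_vanishing_of_summable_norm hf (show (0 : ℝ) < 1 / 2 by norm_num)
  have hpos : ∀ i, 0 < min ‖1 + f i‖ 1 := fun i ↦ lt_min (norm_pos_iff.mpr (hne i)) one_pos
  have hprod : 0 < ∏ i ∈ s, min ‖1 + f i‖ 1 := Finset.prod_pos fun i _ ↦ hpos i
  refine ⟨(∏ i ∈ s, min ‖1 + f i‖ 1) / 2, by positivity, fun t ↦ ?_⟩
  have hinter : ∏ i ∈ s, min ‖1 + f i‖ 1 ≤ ∏ i ∈ t ∩ s, ‖1 + f i‖ :=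
    calc ∏ i ∈ s, min ‖1 + f i‖ 1
        ≤ ∏ i ∈ t ∩ s, min ‖1 + f i‖ 1 :=
          Finset.prod_le_prod_of_subset_of_le_one Finset.inter_subset_right
            (fun i _ ↦ (hpos i).le) (fun i _ _ ↦ min_le_right _ _)
      _ ≤ ∏ i ∈ t ∩ s, ‖1 + f i‖ :=
          Finset.prod_le_prod (fun i _ ↦ (hpos i).le) (fun i _ ↦ min_le_left _ _)
  have hsdiff : 1 / 2 ≤ ∏ i ∈ t \ s, ‖1 + f i‖ := by
    have h := hs (t \ s) Finset.sdiff_disjoint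
    have h' := norm_sub_norm_le (1 : R) (∏ i ∈ t \ s, (1 + f i))
    rw [norm_one, norm_sub_rev] at h'
    linarith [Finset.norm_prod_le (t \ s) fun i ↦ 1 + f i]
  rw [← Finset.prod_inter_mul_prod_sdiff t s, div_eq_mul_one_div]
  exact mul_le_mul hinter hsdiff (by norm_num) (Finset.prod_nonneg fun i _ ↦ norm_nonneg _)

lemma exists_pos_le_norm_qPoch {a q : ℂ} (hq : ‖q‖ < 1) (hne : ∀ k, 1 - a * q ^ k ≠ 0) :
    ∃ c > 0, ∀ m n, c ≤ ‖qPoch (a * q ^ m) q n‖ := by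
  have hs : Summable fun k ↦ ‖-(a * q ^ k)‖ := by
    simpa [norm_pow] using (summable_geometric_of_lt_one (norm_nonneg q) hq).mul_left ‖a‖
  obtain ⟨c, hc, hprod⟩ := exists_pos_le_prod_norm_one_add hs fun k ↦ by
    simpa [← sub_eq_add_neg] using hne k
  refine ⟨c, hc, fun m n ↦ ?_⟩
  convert hprod ((Finset.range n).map (addLeftEmbedding m)) using 1
  simp [qPoch, norm_prod, ← sub_eq_add_neg, pow_add, mul_assoc]

lemma exists_pos_le_norm_qPoch_sq_shift {q y : ℂ} (hq : ‖q‖ < 1)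
    (hden : ∀ k : ℕ, 1 - y * q ^ (2 * k + 1) ≠ 0) :
    ∃ c > 0, ∀ m n, c ≤ ‖qPoch (y * (q ^ 2) ^ m * q) (q ^ 2) n‖ := by
  have hq2 : ‖q ^ 2‖ < 1 := by simpa using pow_lt_one₀ (norm_nonneg q) hq two_ne_zero
  obtain ⟨c, hc, hpoch⟩ := exists_pos_le_norm_qPoch (a := y * q) hq2 fun k ↦ by
    convert hden k using 2; ring
  exact ⟨c, hc, fun m ↦ by simpa only [mul_right_comm y] using hpoch m⟩

lemma norm_mul_pow_sq_pow_le {q : ℂ} (hq : ‖q‖ ≤ 1) (y : ℂ) (m : ℕ) :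
    ‖y * (q ^ 2) ^ m‖ ≤ ‖y‖ := by
  rw [norm_mul, norm_pow, norm_pow]
  exact mul_le_of_le_one_right (norm_nonneg y)
    (pow_le_one₀ (by positivity) (pow_le_one₀ (norm_nonneg q) hq))

lemma summable_pow_mul_pow_sq {a r : ℝ} (ha : 0 ≤ a) (hr₀ : 0 ≤ r) (hr : r < 1) :
    Summable fun n : ℕ ↦ a ^ n * r ^ (n ^ 2) := by
  have hlim : Filter.Tendsto (fun n : ℕ ↦ a * r ^ n) Filter.atTop (nhds 0) := by
    simpa using (tendsto_pow_atTop_nhds_zero_of_lt_one hr₀ hr).const_mul a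
  refine .of_norm_bounded_eventually_nat summable_geometric_two ?_
  filter_upwards [hlim.eventually_le_const (show (0 : ℝ) < 1 / 2 by norm_num)] with n hn
  rw [sq, pow_mul, ← mul_pow, Real.norm_of_nonneg (by positivity)]
  exact pow_le_pow_left₀ (by positivity) hn n

lemma summable_norm_pow_mul_pow_mul_pow_sq_add {q : ℂ} (hq : ‖q‖ < 1) (y z : ℂ) :
    Summable fun n : ℕ ↦ ‖y ^ n * z ^ n * q ^ (n ^ 2 + n)‖ :=
  (summable_pow_mul_pow_sq (a := ‖y‖ * ‖z‖ * ‖q‖) (by positivity) (norm_nonneg q) hq).congr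
    fun n ↦ by simp only [norm_mul, norm_pow]; ring

section NuTrivariate

variable {q y z : ℂ}

noncomputable def nuTerm (q y z : ℂ) (n : ℕ) : ℂ :=
  y ^ n * z ^ n * q ^ (n ^ 2 + n) / qPoch (y * q) (q ^ 2) (n + 1)

noncomputable def nuDualTerm (q y z : ℂ) (n : ℕ) : ℂ :=
  qPoch (-(z * q)) (q ^ 2) n * (y * q) ^ n

lemma one_sub_mul_tsum_nuTerm (hy : 1 - y * q ≠ 0) (hs : Summable (nuTerm q y z)) :
    (1 - y * q) * ∑' n, nuTerm q y z n = 1 + y * z * q ^ 2 * ∑' n, nuTerm q (y * q ^ 2) z n := by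
  have hterm : ∀ n, (1 - y * q) * nuTerm q y z n
      = y ^ n * z ^ n * q ^ (n ^ 2 + n) / qPoch (y * q ^ 2 * q) (q ^ 2) n := fun n ↦ by
    rw [nuTerm, qPoch_succ', ← mul_div_assoc, mul_div_mul_left _ _ hy, mul_right_comm y q (q ^ 2)]
  have hs' := (hs.mul_left (1 - y * q)).congr hterm
  rw [← tsum_mul_left, tsum_congr hterm, hs'.tsum_eq_zero_add, ← tsum_mul_left]
  congr 1
  · simp [qPoch]
  · refine tsum_congr fun n ↦ ?_
    rw [nuTerm, mul_div_assoc', qPoch_succ']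
    ring_nf

lemma nuDualTerm_succ (n : ℕ) :
    nuDualTerm q y z (n + 1)
      = y * q * nuDualTerm q y z n + y * z * q ^ 2 * nuDualTerm q (y * q ^ 2) z n := by
  simp only [nuDualTerm, qPoch_succ]
  ring

lemma one_sub_mul_tsum_nuDualTerm (hs : Summable (nuDualTerm q y z))
    (hs' : Summable (nuDualTerm q (y * q ^ 2) z)) :
    (1 - y * q) * ∑' n, nuDualTerm q y z n
      = 1 + y * z * q ^ 2 * ∑' n, nuDualTerm q (y * q ^ 2) z n := by
  have hsucc : ∑' n, nuDualTerm q y z (n + 1)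
      = y * q * ∑' n, nuDualTerm q y z n + y * z * q ^ 2 * ∑' n, nuDualTerm q (y * q ^ 2) z n := by
    rw [tsum_congr nuDualTerm_succ, (hs.mul_left _).tsum_add (hs'.mul_left _), tsum_mul_left,
      tsum_mul_left]
  have hzero : nuDualTerm q y z 0 = 1 := by simp [nuDualTerm, qPoch]
  linear_combination hs.tsum_eq_zero_add + hsucc + hzero

lemma one_sub_mul_tsum_sub_tsum (hy : 1 - y * q ≠ 0) (hL : Summable (nuTerm q y z))
    (hR : Summable (nuDualTerm q y z)) (hR' : Summable (nuDualTerm q (y * q ^ 2) z)) :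
    (1 - y * q) * (∑' n, nuTerm q y z n - ∑' n, nuDualTerm q y z n)
      = y * z * q ^ 2 * (∑' n, nuTerm q (y * q ^ 2) z n - ∑' n, nuDualTerm q (y * q ^ 2) z n) := by
  linear_combination one_sub_mul_tsum_nuTerm hy hL - one_sub_mul_tsum_nuDualTerm hR hR'

lemma qPoch_mul_eq_of_recurrence {f : ℕ → ℂ}
    (hf : ∀ m, (1 - y * (q ^ 2) ^ m * q) * f m = y * (q ^ 2) ^ m * z * q ^ 2 * f (m + 1)) (n : ℕ) :
    qPoch (y * q) (q ^ 2) n * f 0 = y ^ n * z ^ n * q ^ (n ^ 2 + n) * f n := by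
  induction n with
  | zero => simp [qPoch]
  | succ n ih =>
    rw [qPoch_succ]
    linear_combination (1 - y * q * (q ^ 2) ^ n) * ih + y ^ n * z ^ n * q ^ (n ^ 2 + n) * hf n

lemma eq_zero_of_recurrence {f : ℕ → ℂ} {B c : ℝ} (hq : ‖q‖ < 1) (hc : 0 < c)
    (hpoch : ∀ n, c ≤ ‖qPoch (y * q) (q ^ 2) n‖) (hB : ∀ m, ‖f m‖ ≤ B)
    (hf : ∀ m, (1 - y * (q ^ 2) ^ m * q) * f m = y * (q ^ 2) ^ m * z * q ^ 2 * f (m + 1)) :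
    f 0 = 0 := by
  have hlim : Filter.Tendsto (fun n : ℕ ↦ ‖y ^ n * z ^ n * q ^ (n ^ 2 + n)‖ * B)
      Filter.atTop (nhds 0) := by
    simpa using (summable_norm_pow_mul_pow_mul_pow_sq_add hq y z).tendsto_atTop_zero.mul_const B
  have hle : ∀ n, c * ‖f 0‖ ≤ ‖y ^ n * z ^ n * q ^ (n ^ 2 + n)‖ * B := fun n ↦
    calc c * ‖f 0‖ ≤ ‖qPoch (y * q) (q ^ 2) n‖ * ‖f 0‖ :=
          mul_le_mul_of_nonneg_right (hpoch n) (norm_nonneg _)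
      _ = ‖y ^ n * z ^ n * q ^ (n ^ 2 + n)‖ * ‖f n‖ := by
          rw [← norm_mul, ← norm_mul, qPoch_mul_eq_of_recurrence hf]
      _ ≤ ‖y ^ n * z ^ n * q ^ (n ^ 2 + n)‖ * B := by gcongr; exact hB n
  have h0 : c * ‖f 0‖ ≤ c * 0 := by simpa using ge_of_tendsto' hlim hle
  exact norm_le_zero_iff.mp (le_of_mul_le_mul_left h0 hc)

lemma norm_nuTerm_le {w : ℂ} {c : ℝ} {n : ℕ} (hw : ‖w‖ ≤ ‖y‖) (hc : 0 < c)
    (hpoch : c ≤ ‖qPoch (w * q) (q ^ 2) (n + 1)‖) :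
    ‖nuTerm q w z n‖ ≤ ‖y ^ n * z ^ n * q ^ (n ^ 2 + n)‖ / c := by
  rw [nuTerm, norm_div]
  simp only [norm_mul, norm_pow]
  gcongr

lemma norm_nuDualTerm_le {w : ℂ} (hw : ‖w‖ ≤ ‖y‖) (n : ℕ) :
    ‖nuDualTerm q w z n‖ ≤ ‖nuDualTerm q y z n‖ := by
  simp only [nuDualTerm, norm_mul, norm_pow]
  gcongr

end NuTrivariate

theorem nu_trivariate_general (q y z : ℂ) (hq : ‖q‖ < 1)
    (hden : ∀ k : ℕ, 1 - y * q ^ (2 * k + 1) ≠ 0)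
    (hR : Summable fun n : ℕ => ‖qPoch (-(z * q)) (q ^ 2) n * (y * q) ^ n‖) :
    ∑' n : ℕ, y ^ n * z ^ n * q ^ (n ^ 2 + n) / qPoch (y * q) (q ^ 2) (n + 1)
      = ∑' n : ℕ, qPoch (-(z * q)) (q ^ 2) n * (y * q) ^ n := by
  show ∑' n, nuTerm q y z n = ∑' n, nuDualTerm q y z n
  obtain ⟨c, hc, hpoch⟩ := exists_pos_le_norm_qPoch_sq_shift hq hden
  have hmaj := (summable_norm_pow_mul_pow_mul_pow_sq_add hq y z).div_const c
  have hL : ∀ m n, ‖nuTerm q (y * (q ^ 2) ^ m) z n‖ ≤ ‖y ^ n * z ^ n * q ^ (n ^ 2 + n)‖ / c :=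
    fun m n ↦ norm_nuTerm_le (norm_mul_pow_sq_pow_le hq.le y m) hc (hpoch m (n + 1))
  have hR' : ∀ m n, ‖nuDualTerm q (y * (q ^ 2) ^ m) z n‖ ≤ ‖nuDualTerm q y z n‖ :=
    fun m ↦ norm_nuDualTerm_le (norm_mul_pow_sq_pow_le hq.le y m)
  have hshift : ∀ m, y * (q ^ 2) ^ m * q ^ 2 = y * (q ^ 2) ^ (m + 1) := fun m ↦ by ring
  have hzero := eq_zero_of_recurrence (z := z) (f := fun m ↦ ∑' n, nuTerm q (y * (q ^ 2) ^ m) z n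
      - ∑' n, nuDualTerm q (y * (q ^ 2) ^ m) z n) hq hc (by simpa using hpoch 0)
    (fun m ↦ (norm_sub_le _ _).trans (add_le_add (tsum_of_norm_bounded hmaj.hasSum (hL m))
      (tsum_of_norm_bounded hR.hasSum (hR' m))))
    (fun m ↦ by
      have hne : 1 - y * (q ^ 2) ^ m * q ≠ 0 := by convert hden m using 2; ring
      have h := one_sub_mul_tsum_sub_tsum hne (.of_norm_bounded hmaj (hL m))
        (.of_norm_bounded hR (hR' m)) (hshift m ▸ .of_norm_bounded hR (hR' (m + 1)))
      rw [hshift] at h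
      linear_combination h)
  simpa [sub_eq_zero] using hzero

theorem nu_trivariate (q y z : ℂ) (hq : ‖q‖ < 1)
    (hden : ∀ k : ℕ, 1 - y * q ^ (2 * k + 1) ≠ 0)
    (hL : Summable fun n : ℕ =>
      ‖y ^ n * z ^ n * q ^ (n ^ 2 + n) / qPoch (y * q) (q ^ 2) (n + 1)‖)
    (hR : Summable fun n : ℕ => ‖qPoch (-(z * q)) (q ^ 2) n * (y * q) ^ n‖) :
    ∑' n : ℕ, y ^ n * z ^ n * q ^ (n ^ 2 + n) / qPoch (y * q) (q ^ 2) (n + 1)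
      = ∑' n : ℕ, qPoch (-(z * q)) (q ^ 2) n * (y * q) ^ n :=
  nu_trivariate_general q y z hq hden hR
end

section
/- For complex q, z with |q| < 1, z ≠ 0, and |zq| < 1, Σ_{n≥0} q^{n²+n} / (zq; q²)_{n+1} = Σ_{n≥0} (−q/z; q²)_n (zq)ⁿ. -/
open scoped BigOperators

/-!
Expanding `1 / (zq; q²)_{n+1}` by the q-binomial series `∑ₘ [n+m, n]_{q²} (zq)ᵐ` turns the
left side into the double sum of `q^(n²+n) [n+m, n]_{q²} (zq)ᵐ`, which converges absolutely
because Gaussian binomials with `|Q| < 1` are bounded by `∏ᵢ (1 - |Q|^(i+1))⁻¹`. Summing it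
along the diagonals `n + m = N` instead, the inner sums are `(-q/z; q²)_N (zq)^N` by Cauchy's
finite q-binomial theorem `(-y; Q)_N = ∑ⱼ Q^(j choose 2) [N, j]_Q yʲ`, with `Q = q²` and
`y = q/z`.
-/

open Finset

section qBinom

variable {R : Type*}

def qBinom [Semiring R] (Q : R) : ℕ → ℕ → R
  | _, 0 => 1
  | 0, _ + 1 => 0
  | n + 1, k + 1 => qBinom Q n k + Q ^ (k + 1) * qBinom Q n (k + 1)

variable [Semiring R] (Q : R)

@[simp] lemma qBinom_zero_right (n : ℕ) : qBinom Q n 0 = 1 := by cases n <;> rfl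

@[simp] lemma qBinom_zero_succ (k : ℕ) : qBinom Q 0 (k + 1) = 0 := rfl

lemma qBinom_succ_succ (n k : ℕ) :
    qBinom Q (n + 1) (k + 1) = qBinom Q n k + Q ^ (k + 1) * qBinom Q n (k + 1) := rfl

lemma qBinom_eq_zero_of_lt : ∀ {n k : ℕ}, n < k → qBinom Q n k = 0
  | 0, _ + 1, _ => rfl
  | n + 1, k + 1, h => by
    rw [qBinom_succ_succ, qBinom_eq_zero_of_lt (by omega), qBinom_eq_zero_of_lt (by omega),
      mul_zero, add_zero]

end qBinom

lemma choose_two_add_self (j : ℕ) : j.choose 2 + j = (j + 1).choose 2 := by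
  rw [Nat.choose_succ_succ', Nat.choose_one_right, add_comm]

theorem prod_one_add_mul_pow_eq_sum_qBinom {R : Type*} [CommSemiring R] (Q : R) (n : ℕ) (y : R) :
    ∏ i ∈ range n, (1 + y * Q ^ i) =
      ∑ j ∈ range (n + 1), Q ^ j.choose 2 * qBinom Q n j * y ^ j := by
  induction n generalizing y with
  | zero => simp
  | succ n ih =>
    set A : ℕ → R := fun j => Q ^ (j + 1).choose 2 * qBinom Q n j * y ^ j with hA
    have hprod : ∏ i ∈ range n, (1 + y * Q ^ (i + 1)) = ∑ j ∈ range (n + 1), A j := by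
      simp_rw [pow_succ', ← mul_assoc, ih, hA, ← choose_two_add_self, pow_add, mul_pow]
      exact sum_congr rfl fun j _ => by ring
    have hshift : ∑ j ∈ range (n + 1), A (j + 1) + 1 = ∑ j ∈ range (n + 1), A j := by
      have hA0 : A 0 = 1 := by simp [hA]
      have hAn : A (n + 1) = 0 := by simp [hA, qBinom_eq_zero_of_lt Q n.lt_succ_self]
      rw [← hA0, ← sum_range_succ', sum_range_succ, hAn, add_zero]
    have hterm : ∀ j, Q ^ (j + 1).choose 2 * qBinom Q (n + 1) (j + 1) * y ^ (j + 1)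
        = A j * y + A (j + 1) := fun j => by
      simp only [hA, qBinom_succ_succ, ← choose_two_add_self (j + 1)]
      ring
    rw [prod_range_succ', pow_zero, mul_one, hprod, sum_range_succ' _ (n + 1),
      sum_congr rfl fun j _ => hterm j, sum_add_distrib, ← sum_mul, ← hshift]
    simp only [Nat.choose_zero_succ, pow_zero, qBinom_zero_right, mul_one]
    ring

lemma norm_qBinom_le_prod {R : Type*} [NormedRing R] [NormOneClass R] {Q : R} (hQ : ‖Q‖ < 1)
    (n k : ℕ) : ‖qBinom Q n k‖ ≤ ∏ i ∈ range k, (1 - ‖Q‖ ^ (i + 1))⁻¹ := by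
  have hfac : ∀ i, 0 < 1 - ‖Q‖ ^ (i + 1) := fun i =>
    sub_pos.2 (pow_lt_one₀ (norm_nonneg Q) hQ i.succ_ne_zero)
  have hprod : ∀ k, 0 ≤ ∏ i ∈ range k, (1 - ‖Q‖ ^ (i + 1))⁻¹ := fun k =>
    prod_nonneg fun i _ => (inv_pos.2 (hfac i)).le
  induction n generalizing k with
  | zero =>
    cases k with
    | zero => simp
    | succ k => simpa only [qBinom_zero_succ, norm_zero] using hprod (k + 1)
  | succ n ih =>
    cases k with
    | zero => simp
    | succ k =>
      set P := ∏ i ∈ range k, (1 - ‖Q‖ ^ (i + 1))⁻¹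
      calc ‖qBinom Q (n + 1) (k + 1)‖
          ≤ ‖qBinom Q n k‖ + ‖Q‖ ^ (k + 1) * ‖qBinom Q n (k + 1)‖ := by
            rw [qBinom_succ_succ]
            refine (norm_add_le _ _).trans (add_le_add le_rfl ?_)
            exact (norm_mul_le _ _).trans
              (mul_le_mul_of_nonneg_right (norm_pow_le _ _) (norm_nonneg _))
        _ ≤ P + ‖Q‖ ^ (k + 1) * (P * (1 - ‖Q‖ ^ (k + 1))⁻¹) := by
            gcongr
            · exact ih k
            · rw [← prod_range_succ]; exact ih (k + 1)
        _ = P * (1 - ‖Q‖ ^ (k + 1))⁻¹ := by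
            field_simp [(hfac k).ne']
            ring
        _ = ∏ i ∈ range (k + 1), (1 - ‖Q‖ ^ (i + 1))⁻¹ := (prod_range_succ _ _).symm

lemma inv_one_sub_le_exp_div {x t : ℝ} (hx : 0 ≤ x) (hxt : x ≤ t) (ht : t < 1) :
    (1 - x)⁻¹ ≤ Real.exp (x / (1 - t)) :=
  calc (1 - x)⁻¹ = x / (1 - x) + 1 := by field_simp [(by linarith : 1 - x ≠ 0)]; ring
    _ ≤ Real.exp (x / (1 - x)) := Real.add_one_le_exp _
    _ ≤ Real.exp (x / (1 - t)) :=
      Real.exp_le_exp.2 (div_le_div_of_nonneg_left hx (by linarith) (by linarith))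

lemma exists_norm_qBinom_le {R : Type*} [NormedRing R] [NormOneClass R] {Q : R}
    (hQ : ‖Q‖ < 1) : ∃ C, ∀ n k, ‖qBinom Q n k‖ ≤ C := by
  set t := ‖Q‖
  have ht : 0 ≤ t := norm_nonneg Q
  have hsum : Summable fun i : ℕ => t ^ (i + 1) / (1 - t) := by
    simpa [pow_succ'] using
      ((summable_geometric_of_lt_one ht hQ).mul_left t).div_const (1 - t)
  refine ⟨Real.exp (∑' i, t ^ (i + 1) / (1 - t)),
    fun n k => (norm_qBinom_le_prod hQ n k).trans ?_⟩
  calc ∏ i ∈ range k, (1 - t ^ (i + 1))⁻¹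
      ≤ ∏ i ∈ range k, Real.exp (t ^ (i + 1) / (1 - t)) :=
        prod_le_prod (fun i _ => (inv_pos.2 (sub_pos.2 (pow_lt_one₀ ht hQ i.succ_ne_zero))).le)
          fun i _ => inv_one_sub_le_exp_div (pow_nonneg ht _)
            (pow_le_of_le_one ht hQ.le i.succ_ne_zero) hQ
    _ = Real.exp (∑ i ∈ range k, t ^ (i + 1) / (1 - t)) := (Real.exp_sum _ _).symm
    _ ≤ Real.exp (∑' i, t ^ (i + 1) / (1 - t)) :=
        Real.exp_le_exp.2 (hsum.sum_le_tsum _ fun i _ => div_nonneg (pow_nonneg ht _) (by linarith))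

section Series

variable {Q x : ℂ}

lemma summable_qBinom_mul_pow (hQ : ‖Q‖ < 1) (hx : ‖x‖ < 1) (n k : ℕ) :
    Summable fun m => qBinom Q (n + m) k * x ^ m := by
  obtain ⟨C, hC⟩ := exists_norm_qBinom_le hQ
  refine Summable.of_norm_bounded ((summable_geometric_of_lt_one (norm_nonneg x) hx).mul_left C)
    fun m => ?_
  rw [norm_mul, norm_pow]
  exact mul_le_mul_of_nonneg_right (hC _ _) (by positivity)

lemma one_sub_mul_pow_ne_zero (hQ : ‖Q‖ ≤ 1) (hx : ‖x‖ < 1) (k : ℕ) :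
    1 - x * Q ^ k ≠ 0 := by
  refine sub_ne_zero.2 fun h => ?_
  have : ‖x * Q ^ k‖ < 1 := by
    rw [norm_mul, norm_pow]
    exact (mul_le_of_le_one_right (norm_nonneg x) (pow_le_one₀ (norm_nonneg Q) hQ)).trans_lt hx
  rw [← h, norm_one] at this
  exact this.false

theorem hasSum_qBinom_mul_pow (hQ : ‖Q‖ < 1) (hx : ‖x‖ < 1) (n : ℕ) :
    HasSum (fun m => qBinom Q (n + m) n * x ^ m) (qPoch x Q (n + 1))⁻¹ := by
  induction n with
  | zero => simpa [qPoch] using hasSum_geometric_of_norm_lt_one hx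
  | succ n ih =>
    obtain ⟨T, hT⟩ := summable_qBinom_mul_pow hQ hx (n + 1) (n + 1)
    have hshift : HasSum (fun m => qBinom Q (n + m) (n + 1) * x ^ m) (x * T) := by
      refine (hasSum_nat_add_iff' 1).1 ?_
      simp only [sum_range_one, add_zero, qBinom_eq_zero_of_lt Q n.lt_succ_self, zero_mul,
        sub_zero]
      refine (hT.mul_left x).congr_fun fun m => ?_
      rw [show n + (m + 1) = n + 1 + m by omega]
      ring
    have hrec : T = (qPoch x Q (n + 1))⁻¹ + Q ^ (n + 1) * (x * T) := by
      refine hT.unique ((ih.add (hshift.mul_left (Q ^ (n + 1)))).congr_fun fun m => ?_)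
      rw [Nat.add_right_comm, qBinom_succ_succ]
      ring
    have hT' : T = (qPoch x Q (n + 1))⁻¹ * (1 - x * Q ^ (n + 1))⁻¹ :=
      (eq_mul_inv_iff_mul_eq₀ (one_sub_mul_pow_ne_zero hQ.le hx _)).2
        (by linear_combination hrec)
    rwa [qPoch, prod_range_succ, ← qPoch, mul_inv, ← hT']

end Series

theorem Summable.tsum_sum_antidiagonal_eq_tsum {α A : Type*} [AddCommGroup α] [UniformSpace α]
    [IsUniformAddGroup α] [CompleteSpace α] [T0Space α] [AddCommMonoid A] [HasAntidiagonal A]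
    {f : A × A → α} (hf : Summable f) :
    ∑' n, ∑ p ∈ antidiagonal n, f p = ∑' p, f p := by
  let e := HasAntidiagonal.sigmaAntidiagonalEquivProd (A := A)
  calc ∑' n, ∑ p ∈ antidiagonal n, f p = ∑' n, ∑' p : antidiagonal n, f p :=
        tsum_congr fun n => (Finset.tsum_subtype _ f).symm
    _ = ∑' c, f (e c) := (e.summable_iff.2 hf).tsum_sigma.symm
    _ = ∑' p, f p := e.tsum_eq f

section Nu

variable {q z : ℂ}

noncomputable def nuSummand (q z : ℂ) (p : ℕ × ℕ) : ℂ :=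
  q ^ (p.1 ^ 2 + p.1) * qBinom (q ^ 2) (p.1 + p.2) p.1 * (z * q) ^ p.2

lemma norm_sq_lt_one (hq : ‖q‖ < 1) : ‖q ^ 2‖ < 1 := by
  simpa using pow_lt_one₀ (norm_nonneg q) hq two_ne_zero

lemma summable_nuSummand (hq : ‖q‖ < 1) (hzq : ‖z * q‖ < 1) : Summable (nuSummand q z) := by
  obtain ⟨C, hC⟩ := exists_norm_qBinom_le (norm_sq_lt_one hq)
  have hgeom : Summable fun p : ℕ × ℕ => ‖q‖ ^ p.1 * ‖z * q‖ ^ p.2 :=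
    (summable_geometric_of_lt_one (norm_nonneg q) hq).mul_of_nonneg
      (summable_geometric_of_lt_one (norm_nonneg _) hzq) (fun _ => by positivity)
      fun _ => by positivity
  refine Summable.of_norm_bounded (hgeom.mul_left C) fun ⟨j, m⟩ => ?_
  have hpow : ‖q‖ ^ (j ^ 2 + j) ≤ ‖q‖ ^ j :=
    pow_le_pow_of_le_one (norm_nonneg q) hq.le (Nat.le_add_left j _)
  calc ‖nuSummand q z (j, m)‖
      = ‖qBinom (q ^ 2) (j + m) j‖ * (‖q‖ ^ (j ^ 2 + j) * ‖z * q‖ ^ m) := by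
        simp only [nuSummand, norm_mul, norm_pow]
        ring
    _ ≤ C * (‖q‖ ^ j * ‖z * q‖ ^ m) := by
        gcongr
        · exact (norm_nonneg _).trans (hC 0 0)
        · exact hC _ _

lemma hasSum_nuSummand_row (hq : ‖q‖ < 1) (hzq : ‖z * q‖ < 1) (n : ℕ) :
    HasSum (fun m => nuSummand q z (n, m)) (q ^ (n ^ 2 + n) / qPoch (z * q) (q ^ 2) (n + 1)) := by
  rw [div_eq_mul_inv]
  refine ((hasSum_qBinom_mul_pow (norm_sq_lt_one hq) hzq n).mul_left _).congr_fun fun m => ?_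
  simp only [nuSummand]
  ring

lemma sum_antidiagonal_nuSummand (hz : z ≠ 0) (N : ℕ) :
    ∑ p ∈ antidiagonal N, nuSummand q z p = qPoch (-(q / z)) (q ^ 2) N * (z * q) ^ N := by
  have hpoch : qPoch (-(q / z)) (q ^ 2) N = ∏ i ∈ range N, (1 + q / z * (q ^ 2) ^ i) :=
    prod_congr rfl fun i _ => by ring
  rw [Nat.sum_antidiagonal_eq_sum_range_succ_mk, hpoch, prod_one_add_mul_pow_eq_sum_qBinom,
    sum_mul]
  refine sum_congr rfl fun j hj => ?_
  have hjN : j ≤ N := Nat.lt_succ_iff.mp (mem_range.mp hj)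
  have hexp : j ^ 2 + j = 2 * (j.choose 2 + j) := by
    have := Nat.add_one_mul_choose_eq j 1
    rw [Nat.choose_one_right] at this
    rw [choose_two_add_self]
    linarith
  have hqz : q / z * (z * q) = q ^ 2 := by field_simp
  simp only [nuSummand]
  rw [Nat.add_sub_cancel' hjN, ← pow_mul_pow_sub (z * q) hjN, hexp, pow_mul]
  symm
  calc (q ^ 2) ^ j.choose 2 * qBinom (q ^ 2) N j * (q / z) ^ j * ((z * q) ^ j * (z * q) ^ (N - j))
      = (q ^ 2) ^ j.choose 2 * qBinom (q ^ 2) N j * (q / z * (z * q)) ^ j * (z * q) ^ (N - j) := by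
        ring
    _ = _ := by rw [hqz]; ring

end Nu

theorem nu_spec_2_5_general (q z : ℂ) (hq : ‖q‖ < 1) (hz : z ≠ 0) (hzq : ‖z * q‖ < 1) :
    ∑' n : ℕ, q ^ (n ^ 2 + n) / qPoch (z * q) (q ^ 2) (n + 1)
      = ∑' n : ℕ, qPoch (-(q / z)) (q ^ 2) n * (z * q) ^ n :=
  calc ∑' n : ℕ, q ^ (n ^ 2 + n) / qPoch (z * q) (q ^ 2) (n + 1)
      = ∑' n, ∑' m, nuSummand q z (n, m) :=
        tsum_congr fun n => (hasSum_nuSummand_row hq hzq n).tsum_eq.symm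
    _ = ∑' p, nuSummand q z p := (summable_nuSummand hq hzq).tsum_prod.symm
    _ = ∑' N, ∑ p ∈ antidiagonal N, nuSummand q z p :=
        (summable_nuSummand hq hzq).tsum_sum_antidiagonal_eq_tsum.symm
    _ = ∑' n : ℕ, qPoch (-(q / z)) (q ^ 2) n * (z * q) ^ n :=
        tsum_congr (sum_antidiagonal_nuSummand hz)

theorem nu_spec_2_5 (q z : ℂ) (hq : ‖q‖ < 1) (hz : z ≠ 0) (hzq : ‖z * q‖ < 1)
    (hden : ∀ k : ℕ, 1 - z * q ^ (2 * k + 1) ≠ 0) :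
    ∑' n : ℕ, q ^ (n ^ 2 + n) / qPoch (z * q) (q ^ 2) (n + 1)
      = ∑' n : ℕ, qPoch (-(q / z)) (q ^ 2) n * (z * q) ^ n :=
  nu_spec_2_5_general q z hq hz hzq
end

section
/- For complex q, z with |q| < 1 and |zq| < 1, Σ_{n≥0} zⁿ q^{n²+n} / (−zq; q²)_{n+1} = Σ_{n≥0} (q; q²)_n (−zq)ⁿ. -/
/-
Write `[N, k]_Q` for the Gaussian binomial coefficients. Their column generating functions are
`∑_N [N, k]_Q t^N = t^k / (t; Q)_{k+1}`, and the finite `q`-binomial theorem reads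
`(x; Q)_N = ∑_k (-x)^k Q^(k choose 2) [N, k]_Q`. Hence the absolutely convergent double series
`∑_{N,k} (-x)^k Q^(k choose 2) [N, k]_Q t^N` sums to `∑_N (x; Q)_N t^N` by rows and to
`∑_k (-x t)^k Q^(k choose 2) / (t; Q)_{k+1}` by columns. For `x = q`, `Q = q²`, `t = -zq` this is
the identity, since `(zq²)^n q^(2 (n choose 2)) = z^n q^(n² + n)`.
-/

open scoped BigOperators

open Finset

def gaussBinom {R : Type*} [Semiring R] (Q : R) : ℕ → ℕ → R
  | _, 0 => 1
  | 0, _ + 1 => 0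
  | N + 1, k + 1 => gaussBinom Q N k + Q ^ (k + 1) * gaussBinom Q N (k + 1)

section GaussBinom

variable {R : Type*}

@[simp]
lemma gaussBinom_zero_right [Semiring R] (Q : R) (N : ℕ) : gaussBinom Q N 0 = 1 := by
  cases N <;> rfl

lemma gaussBinom_succ_succ [Semiring R] (Q : R) (N k : ℕ) :
    gaussBinom Q (N + 1) (k + 1) = gaussBinom Q N k + Q ^ (k + 1) * gaussBinom Q N (k + 1) := rfl

lemma gaussBinom_eq_zero_of_lt [Semiring R] (Q : R) {N k : ℕ} (h : N < k) :
    gaussBinom Q N k = 0 := by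
  induction N generalizing k with
  | zero => obtain ⟨k, rfl⟩ := Nat.exists_eq_add_one_of_ne_zero h.ne'; rfl
  | succ N ih =>
    obtain ⟨k, rfl⟩ := Nat.exists_eq_add_one_of_ne_zero (Nat.ne_zero_of_lt h)
    rw [gaussBinom_succ_succ, ih (by omega), ih (by omega), mul_zero, add_zero]

theorem prod_one_sub_mul_pow_eq_sum [CommRing R] (Q x : R) (N : ℕ) :
    ∏ k ∈ range N, (1 - x * Q ^ k)
      = ∑ k ∈ range (N + 1), (-x) ^ k * Q ^ k.choose 2 * gaussBinom Q N k := by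
  induction N generalizing x with
  | zero => simp
  | succ N ih =>
    set T : ℕ → R := fun k => (-(x * Q)) ^ k * Q ^ k.choose 2 * gaussBinom Q N k with hT
    have hpascal : ∀ k, (-x) ^ (k + 1) * Q ^ (k + 1).choose 2 * gaussBinom Q (N + 1) (k + 1)
        = -x * T k + T (k + 1) := fun k => by
      simp only [hT, gaussBinom_succ_succ, Nat.choose_succ_succ', Nat.choose_one_right]
      ring
    have hsum : ∑ k ∈ range (N + 1), T k = ∑ k ∈ range (N + 2), T k := by
      rw [sum_range_succ _ (N + 1), hT]
      simp [gaussBinom_eq_zero_of_lt Q (Nat.lt_succ_self N)]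
    calc ∏ k ∈ range (N + 1), (1 - x * Q ^ k)
        = (1 - x) * ∏ k ∈ range N, (1 - x * Q * Q ^ k) := by
          rw [prod_range_succ', pow_zero, mul_one, mul_comm]
          exact congrArg _ (prod_congr rfl fun k _ => by ring)
      _ = (1 - x) * ∑ k ∈ range (N + 1), T k := by rw [ih]
      _ = T 0 + -x * ∑ k ∈ range (N + 1), T k + ∑ k ∈ range (N + 1), T (k + 1) := by
          have hshift := hsum.trans (sum_range_succ' T (N + 1))
          linear_combination hshift
      _ = _ := by
          rw [sum_range_succ' _ (N + 1), mul_sum]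
          simp only [hpascal, sum_add_distrib]
          simp [hT]
          ring

lemma norm_gaussBinom_le [SeminormedRing R] [NormOneClass R] {Q : R} (hQ : ‖Q‖ < 1)
    (N k : ℕ) : ‖gaussBinom Q N k‖ ≤ (1 - ‖Q‖)⁻¹ ^ k := by
  have hpos : 0 < 1 - ‖Q‖ := sub_pos.mpr hQ
  induction N generalizing k with
  | zero => cases k <;> simp [gaussBinom, hpos.le]
  | succ N ih =>
    cases k with
    | zero => simp
    | succ k =>
      have hQk : ‖Q ^ (k + 1)‖ ≤ ‖Q‖ :=
        (norm_pow_le' Q k.succ_pos).trans (pow_le_of_le_one (norm_nonneg Q) hQ.le k.succ_ne_zero)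
      calc ‖gaussBinom Q (N + 1) (k + 1)‖
          ≤ (1 - ‖Q‖)⁻¹ ^ k + ‖Q‖ * (1 - ‖Q‖)⁻¹ ^ (k + 1) := by
            rw [gaussBinom_succ_succ]
            refine (norm_add_le _ _).trans (add_le_add (ih k) ?_)
            exact (norm_mul_le _ _).trans (mul_le_mul hQk (ih _) (norm_nonneg _) (norm_nonneg _))
        _ = (1 - ‖Q‖)⁻¹ ^ (k + 1) := by
            have hinv : (1 - ‖Q‖) * (1 - ‖Q‖)⁻¹ = 1 := mul_inv_cancel₀ hpos.ne'
            rw [pow_succ]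
            linear_combination -(1 - ‖Q‖)⁻¹ ^ k * hinv

end GaussBinom

lemma summable_pow_mul_pow_choose_two {r s : ℝ} (hs₀ : 0 ≤ s) (hs : s < 1) :
    Summable fun n : ℕ => r ^ n * s ^ n.choose 2 := by
  refine summable_of_ratio_norm_eventually_le (r := 2⁻¹) (by norm_num) ?_
  have hlim : Filter.Tendsto (fun n : ℕ => ‖r‖ * s ^ n) Filter.atTop (nhds 0) := by
    simpa using (tendsto_pow_atTop_nhds_zero_of_lt_one hs₀ hs).const_mul ‖r‖
  filter_upwards [hlim.eventually_le_const (by norm_num : (0 : ℝ) < 2⁻¹)] with n hn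
  calc ‖r ^ (n + 1) * s ^ (n + 1).choose 2‖ = ‖r‖ * s ^ n * ‖r ^ n * s ^ n.choose 2‖ := by
        simp only [Nat.choose_succ_succ', Nat.choose_one_right, norm_mul, norm_pow,
          Real.norm_of_nonneg hs₀]
        ring
    _ ≤ 2⁻¹ * ‖r ^ n * s ^ n.choose 2‖ := by gcongr

section Complex

variable {Q t : ℂ}

lemma norm_mul_pow_lt_one (ht : ‖t‖ < 1) (hQ : ‖Q‖ < 1) (k : ℕ) : ‖t * Q ^ k‖ < 1 := by
  rw [norm_mul, norm_pow]
  exact mul_lt_one_of_nonneg_of_lt_one_left (norm_nonneg t) ht (pow_le_one₀ (norm_nonneg Q) hQ.le)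

lemma summable_gaussBinom_mul_pow (hQ : ‖Q‖ < 1) (ht : ‖t‖ < 1) (k : ℕ) :
    Summable fun N => gaussBinom Q N k * t ^ N := by
  refine Summable.of_norm_bounded
    ((summable_geometric_of_lt_one (norm_nonneg t) ht).mul_left ((1 - ‖Q‖)⁻¹ ^ k)) fun N => ?_
  rw [norm_mul, norm_pow]
  exact mul_le_mul_of_nonneg_right (norm_gaussBinom_le hQ N k) (by positivity)

theorem tsum_gaussBinom_mul_pow (hQ : ‖Q‖ < 1) (ht : ‖t‖ < 1) (k : ℕ) :
    ∑' N, gaussBinom Q N k * t ^ N = t ^ k / qPoch t Q (k + 1) := by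
  induction k with
  | zero => simp [qPoch, tsum_geometric_of_norm_lt_one ht, div_eq_mul_inv]
  | succ k ih =>
    set S := ∑' N, gaussBinom Q N (k + 1) * t ^ N with hS
    have hrec : S = t * (t ^ k / qPoch t Q (k + 1)) + t * Q ^ (k + 1) * S := by
      have hsum := summable_gaussBinom_mul_pow hQ ht
      calc S = ∑' N, (t * (gaussBinom Q N k * t ^ N)
            + t * Q ^ (k + 1) * (gaussBinom Q N (k + 1) * t ^ N)) := by
            rw [hS, (hsum (k + 1)).tsum_eq_zero_add]
            simp only [gaussBinom, zero_mul, zero_add]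
            exact tsum_congr fun N => by ring
        _ = _ := by
            rw [Summable.tsum_add ((hsum k).mul_left t) ((hsum (k + 1)).mul_left _), tsum_mul_left,
              tsum_mul_left, ih]
    have hpoch : qPoch t Q (k + 1 + 1) = qPoch t Q (k + 1) * (1 - t * Q ^ (k + 1)) :=
      prod_range_succ _ _
    have hne : 1 - t * Q ^ (k + 1) ≠ 0 :=
      sub_ne_zero.mpr fun h => (norm_mul_pow_lt_one ht hQ (k + 1)).ne (by rw [← h, norm_one])
    rw [hpoch, pow_succ', ← div_div, eq_div_iff hne]
    linear_combination hrec

theorem tsum_qPoch_mul_pow (x : ℂ) (hQ : ‖Q‖ < 1) (ht : ‖t‖ < 1) :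
    ∑' N, qPoch x Q N * t ^ N = ∑' k, (-x * t) ^ k * Q ^ k.choose 2 / qPoch t Q (k + 1) := by
  set f : ℕ → ℕ → ℂ := fun N k => (-x) ^ k * Q ^ k.choose 2 * gaussBinom Q N k * t ^ N
  have hf : Summable (Function.uncurry f) := by
    refine Summable.of_norm_bounded ((summable_geometric_of_lt_one (norm_nonneg t) ht).mul_of_nonneg
      (summable_pow_mul_pow_choose_two (r := ‖x‖ * (1 - ‖Q‖)⁻¹) (norm_nonneg Q) hQ)
      (fun _ => by positivity) (fun _ => by positivity)) ?_
    rintro ⟨N, k⟩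
    have hbound := norm_gaussBinom_le hQ N k
    calc ‖f N k‖ = ‖t‖ ^ N * (‖x‖ ^ k * ‖gaussBinom Q N k‖ * ‖Q‖ ^ k.choose 2) := by
          simp only [f, norm_mul, norm_pow, norm_neg]; ring
      _ ≤ ‖t‖ ^ N * (‖x‖ ^ k * (1 - ‖Q‖)⁻¹ ^ k * ‖Q‖ ^ k.choose 2) := by gcongr
      _ = _ := by rw [mul_pow]
  have hrow : ∀ N, ∑' k, f N k = qPoch x Q N * t ^ N := fun N => by
    rw [tsum_eq_sum (s := range (N + 1)) fun k hk => by
      simp [f, gaussBinom_eq_zero_of_lt Q (not_lt.mp (mem_range.not.mp hk))]]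
    rw [qPoch, prod_one_sub_mul_pow_eq_sum, sum_mul]
  have hcol : ∀ k, ∑' N, f N k = (-x * t) ^ k * Q ^ k.choose 2 / qPoch t Q (k + 1) := fun k => by
    simp only [f, mul_assoc, tsum_mul_left, tsum_gaussBinom_mul_pow hQ ht]
    ring
  calc ∑' N, qPoch x Q N * t ^ N = ∑' N, ∑' k, f N k := (tsum_congr hrow).symm
    _ = ∑' k, ∑' N, f N k := hf.tsum_comm.symm
    _ = _ := tsum_congr hcol

end Complex

theorem nu_spec_2_14 (q z : ℂ) (hq : ‖q‖ < 1) (hzq : ‖z * q‖ < 1) :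
    ∑' n : ℕ, z ^ n * q ^ (n ^ 2 + n) / qPoch (-(z * q)) (q ^ 2) (n + 1)
      = ∑' n : ℕ, qPoch q (q ^ 2) n * (-(z * q)) ^ n := by
  have hQ : ‖q ^ 2‖ < 1 := by rw [norm_pow]; exact pow_lt_one₀ (norm_nonneg q) hq two_ne_zero
  have ht : ‖-(z * q)‖ < 1 := by rwa [norm_neg]
  rw [tsum_qPoch_mul_pow q hQ ht]
  refine tsum_congr fun n => ?_
  have hsq : n ^ 2 = n + 2 * n.choose 2 := by
    rw [Nat.choose_two_right, Nat.mul_div_cancel' (Nat.even_mul_pred_self n).two_dvd]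
    cases n <;> simp; ring
  rw [hsq, ← pow_mul]
  ring
end

section
/- For complex q, z with |q| < 1 and |zq| < 1, ν₁(z;q) := Σ_{n≥0} zⁿ q^{n²+n} / (−q; q²)_{n+1} = Σ_{n≥0} (zq; q²)_n (−q)ⁿ. -/
open scoped BigOperators

/-!
Write `ν₁(w)` for the left-hand side as a function of `w`. Since its `n`-th term picks up the
factor `q^{2n}` when `w` is replaced by `w q²`, comparing consecutive terms gives the functional
equation `ν₁(w) = 1 - q (1 - w q) ν₁(w q²)`. Iterating it `N` times produces the `N`-th partial sum
of the right-hand side plus `(-q)^N (zq; q²)_N ν₁(z q^{2N})`, and this remainder tends to `0`: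
`ν₁` is bounded on the disc of radius `‖z‖` and `(zq; q²)_N` is bounded in `N`.
-/

open Filter Topology

namespace AndrewsYee

lemma qPoch_succ (a q : ℂ) (n : ℕ) : qPoch a q (n + 1) = qPoch a q n * (1 - a * q ^ n) :=
  Finset.prod_range_succ _ _

lemma norm_qPoch_le_exp {a p : ℂ} (hp : ‖p‖ < 1) (n : ℕ) :
    ‖qPoch a p n‖ ≤ Real.exp (‖a‖ / (1 - ‖p‖)) := by
  calc ‖qPoch a p n‖ = ∏ k ∈ Finset.range n, ‖1 - a * p ^ k‖ := norm_prod _ _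
    _ ≤ ∏ k ∈ Finset.range n, (1 + ‖a‖ * ‖p‖ ^ k) := by
      gcongr with k
      simpa using norm_sub_le (1 : ℂ) (a * p ^ k)
    _ ≤ Real.exp (∑ k ∈ Finset.range n, ‖a‖ * ‖p‖ ^ k) :=
      Real.prod_one_add_le_exp_sum _ fun k => by positivity
    _ ≤ Real.exp (‖a‖ / (1 - ‖p‖)) := by
      rw [Real.exp_le_exp, ← Finset.mul_sum, div_eq_mul_inv]
      gcongr
      rw [← tsum_geometric_of_lt_one (norm_nonneg p) hp]
      exact (summable_geometric_of_lt_one (norm_nonneg p) hp).sum_le_tsum _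
        fun k _ => by positivity

lemma summable_qPoch_mul_pow (a : ℂ) {p x : ℂ} (hp : ‖p‖ < 1) (hx : ‖x‖ < 1) :
    Summable fun n => qPoch a p n * x ^ n := by
  refine .of_norm_bounded ((summable_geometric_of_lt_one (norm_nonneg x) hx).mul_left
    (Real.exp (‖a‖ / (1 - ‖p‖)))) fun n => ?_
  rw [norm_mul, norm_pow]
  gcongr
  exact norm_qPoch_le_exp hp n

variable {q : ℂ}

lemma one_sub_norm_le_norm_one_add_pow (hq : ‖q‖ ≤ 1) (n : ℕ) :
    1 - ‖q‖ ≤ ‖1 + q ^ (n + 1)‖ := by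
  have hpow : ‖q‖ ^ (n + 1) ≤ ‖q‖ := pow_le_of_le_one (norm_nonneg q) hq n.succ_ne_zero
  have := norm_sub_norm_le (1 : ℂ) (-q ^ (n + 1))
  simp only [norm_one, norm_neg, norm_pow, sub_neg_eq_add] at this
  linarith

lemma one_add_pow_ne_zero (hq : ‖q‖ < 1) (n : ℕ) : 1 + q ^ (n + 1) ≠ 0 := by
  intro h
  have := one_sub_norm_le_norm_one_add_pow hq.le n
  rw [h, norm_zero] at this
  linarith

lemma qPoch_neg_sq_succ (q : ℂ) (n : ℕ) :
    qPoch (-q) (q ^ 2) (n + 1) = qPoch (-q) (q ^ 2) n * (1 + q ^ (2 * n + 1)) := by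
  rw [qPoch_succ]
  ring

lemma qPoch_neg_sq_ne_zero (hq : ‖q‖ < 1) (n : ℕ) : qPoch (-q) (q ^ 2) n ≠ 0 := by
  induction n with
  | zero => simp [qPoch]
  | succ n ih => exact qPoch_neg_sq_succ q n ▸ mul_ne_zero ih (one_add_pow_ne_zero hq _)

noncomputable def nuTerm (q w : ℂ) (n : ℕ) : ℂ :=
  w ^ n * q ^ (n ^ 2 + n) / qPoch (-q) (q ^ 2) (n + 1)

noncomputable def nu1 (q w : ℂ) : ℂ := ∑' n, nuTerm q w n

lemma one_add_mul_nuTerm_zero (hq : ‖q‖ < 1) (w : ℂ) : (1 + q) * nuTerm q w 0 = 1 := by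
  have := one_add_pow_ne_zero hq 0
  rw [zero_add, pow_one] at this
  simp [nuTerm, qPoch, this]

lemma one_add_mul_nuTerm_succ (hq : ‖q‖ < 1) (w : ℂ) (n : ℕ) :
    (1 + q ^ (2 * n + 3)) * nuTerm q w (n + 1) = w * q ^ (2 * n + 2) * nuTerm q w n := by
  have h₁ := qPoch_neg_sq_ne_zero hq (n + 1)
  have h₂ := one_add_pow_ne_zero hq (2 * n + 2)
  rw [nuTerm, nuTerm, qPoch_neg_sq_succ q (n + 1), show 2 * (n + 1) + 1 = 2 * n + 2 + 1 by ring]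
  field_simp
  ring

lemma nuTerm_mul_sq (q w : ℂ) (n : ℕ) : nuTerm q (w * q ^ 2) n = q ^ (2 * n) * nuTerm q w n := by
  simp only [nuTerm]
  ring

lemma norm_nuTerm_succ_le (hq : ‖q‖ < 1) (w : ℂ) (n : ℕ) :
    ‖nuTerm q w (n + 1)‖ ≤ ‖w‖ * ‖q‖ ^ (2 * n + 2) / (1 - ‖q‖) * ‖nuTerm q w n‖ := by
  have h := congrArg norm (one_add_mul_nuTerm_succ hq w n)
  simp only [norm_mul, norm_pow] at h
  rw [div_mul_eq_mul_div, le_div_iff₀ (by linarith)]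
  calc ‖nuTerm q w (n + 1)‖ * (1 - ‖q‖)
      ≤ ‖nuTerm q w (n + 1)‖ * ‖1 + q ^ (2 * n + 3)‖ :=
        by gcongr; exact one_sub_norm_le_norm_one_add_pow hq.le _
    _ = ‖w‖ * ‖q‖ ^ (2 * n + 2) * ‖nuTerm q w n‖ := by rw [mul_comm, h]

lemma summable_norm_nuTerm (hq : ‖q‖ < 1) (w : ℂ) : Summable fun n => ‖nuTerm q w n‖ := by
  have hexp : Tendsto (fun n : ℕ => 2 * n + 2) atTop atTop :=
    tendsto_atTop_mono (fun n => show n ≤ 2 * n + 2 by omega) tendsto_id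
  have hratio : Tendsto (fun n : ℕ => ‖w‖ * ‖q‖ ^ (2 * n + 2) / (1 - ‖q‖)) atTop (𝓝 0) := by
    simpa using (((tendsto_pow_atTop_nhds_zero_of_lt_one (norm_nonneg q) hq).comp
      hexp).const_mul ‖w‖).div_const (1 - ‖q‖)
  refine summable_of_ratio_norm_eventually_le (r := 1 / 2) (by norm_num) ?_
  filter_upwards [hratio.eventually (ge_mem_nhds one_half_pos)] with n hn
  simp only [norm_norm]
  exact (norm_nuTerm_succ_le hq w n).trans (by gcongr)

lemma summable_nuTerm (hq : ‖q‖ < 1) (w : ℂ) : Summable (nuTerm q w) :=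
  (summable_norm_nuTerm hq w).of_norm

lemma norm_nu1_le (hq : ‖q‖ < 1) {w : ℂ} {r : ℝ} (hw : ‖w‖ ≤ r) :
    ‖nu1 q w‖ ≤ ∑' n, ‖nuTerm q r n‖ := by
  refine tsum_of_norm_bounded (summable_norm_nuTerm hq _).hasSum fun n => ?_
  have hr : 0 ≤ r := (norm_nonneg w).trans hw
  simp only [nuTerm, norm_div, norm_mul, norm_pow, Complex.norm_real, Real.norm_of_nonneg hr]
  gcongr

lemma nu1_add_mul_nu1 (hq : ‖q‖ < 1) (w : ℂ) :
    nu1 q w + q * (1 - w * q) * nu1 q (w * q ^ 2) = 1 := by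
  have hb : HasSum (nuTerm q (w * q ^ 2)) (nu1 q (w * q ^ 2)) := (summable_nuTerm hq _).hasSum
  have hshift : HasSum (fun n => (1 + q ^ (2 * n + 1)) * nuTerm q w n)
      (1 + w * q ^ 2 * nu1 q (w * q ^ 2)) := by
    have := HasSum.zero_add (f := fun n => (1 + q ^ (2 * n + 1)) * nuTerm q w n)
      ((hb.mul_left (w * q ^ 2)).congr_fun fun n => ?_)
    · simpa only [mul_zero, zero_add, pow_one, one_add_mul_nuTerm_zero hq] using this
    · rw [nuTerm_mul_sq, show 2 * (n + 1) + 1 = 2 * n + 3 by ring, one_add_mul_nuTerm_succ hq]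
      ring
  have hsum : HasSum (fun n => (1 + q ^ (2 * n + 1)) * nuTerm q w n)
      (nu1 q w + q * nu1 q (w * q ^ 2)) := by
    refine ((summable_nuTerm hq w).hasSum.add (hb.mul_left q)).congr_fun fun n => ?_
    rw [nuTerm_mul_sq]
    ring
  linear_combination hsum.unique hshift

lemma nu1_eq_sum_add (hq : ‖q‖ < 1) (z : ℂ) (N : ℕ) :
    nu1 q z = ∑ n ∈ Finset.range N, qPoch (z * q) (q ^ 2) n * (-q) ^ n
      + (-q) ^ N * qPoch (z * q) (q ^ 2) N * nu1 q (z * (q ^ 2) ^ N) := by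
  induction N with
  | zero => simp [qPoch]
  | succ N ih =>
    have := nu1_add_mul_nu1 hq (z * (q ^ 2) ^ N)
    rw [show z * (q ^ 2) ^ N * q ^ 2 = z * (q ^ 2) ^ (N + 1) by ring] at this
    rw [ih, Finset.sum_range_succ, qPoch_succ]
    linear_combination (-q) ^ N * qPoch (z * q) (q ^ 2) N * this

lemma tendsto_nu1_remainder (hq : ‖q‖ < 1) (z : ℂ) :
    Tendsto (fun N => (-q) ^ N * qPoch (z * q) (q ^ 2) N * nu1 q (z * (q ^ 2) ^ N)) atTop (𝓝 0) := by
  have hq2 : ‖q ^ 2‖ < 1 := by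
    rw [norm_pow]
    exact pow_lt_one₀ (norm_nonneg q) hq two_ne_zero
  set K := Real.exp (‖z * q‖ / (1 - ‖q ^ 2‖))
  set C := ∑' n, ‖nuTerm q ‖z‖ n‖
  refine squeeze_zero_norm (fun N => ?_) (by simpa using
    (tendsto_pow_atTop_nhds_zero_of_lt_one (norm_nonneg q) hq).mul_const (K * C))
  have hw : ‖z * (q ^ 2) ^ N‖ ≤ ‖z‖ := by
    rw [norm_mul, norm_pow]
    exact mul_le_of_le_one_right (norm_nonneg z) (pow_le_one₀ (norm_nonneg _) hq2.le)
  rw [norm_mul, norm_mul, norm_pow, norm_neg, mul_assoc]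
  gcongr
  · exact norm_qPoch_le_exp hq2 N
  · exact norm_nu1_le hq hw

end AndrewsYee

open AndrewsYee in
theorem andrews_yee_nu1_general (q z : ℂ) (hq : ‖q‖ < 1) :
    ∑' n : ℕ, z ^ n * q ^ (n ^ 2 + n) / qPoch (-q) (q ^ 2) (n + 1)
      = ∑' n : ℕ, qPoch (z * q) (q ^ 2) n * (-q) ^ n := by
  have hq2 : ‖q ^ 2‖ < 1 := by
    rw [norm_pow]
    exact pow_lt_one₀ (norm_nonneg q) hq two_ne_zero
  have hsum := summable_qPoch_mul_pow (z * q) hq2 (by rwa [norm_neg] : ‖-q‖ < 1)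
  have hpartial : Tendsto (fun N => ∑ n ∈ Finset.range N, qPoch (z * q) (q ^ 2) n * (-q) ^ n)
      atTop (𝓝 (nu1 q z)) := by
    simpa using ((tendsto_const_nhds (x := nu1 q z)).sub (tendsto_nu1_remainder hq z)).congr
      fun N => (eq_sub_of_add_eq (nu1_eq_sum_add hq z N).symm).symm
  exact tendsto_nhds_unique hpartial hsum.hasSum.tendsto_sum_nat

theorem andrews_yee_nu1 (q z : ℂ) (hq : ‖q‖ < 1) (hzq : ‖z * q‖ < 1) :
    ∑' n : ℕ, z ^ n * q ^ (n ^ 2 + n) / qPoch (-q) (q ^ 2) (n + 1)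
      = ∑' n : ℕ, qPoch (z * q) (q ^ 2) n * (-q) ^ n :=
  andrews_yee_nu1_general q z hq
end
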